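/- arXiv:1209.0189 — 2 statements merged into one kernel-verified Lean document; each statement's English description precedes it below -/
import Mathlib

section
/- With the notation of the Csáki–Vincze transform, for every l ≥ 0 one has τ_l = min{ n ≥ 0 : T(S)_n = -2l }. In particular, each τ_l is a stopping time with respect to the natural filtration of T(S). -/
open MeasureTheory ProbabilityTheory Filter

noncomputable section

/-- Increment `X_i = S_i - S_{i-1}` of a walk. -/
def inc (S : ℕ → ℤ) (i : ℕ) : ℤ := S i - S (i - 1)

/-- The times `τ_l` of the Csáki–Vincze construction. -/
def cvTau (S : ℕ → ℤ) : ℕ → ℕ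
  | 0 => 0
  | l + 1 => sInf {i | cvTau S l < i ∧ S (i - 1) * S (i + 1) < 0}

/-- The index `l` such that `τ_l + 1 ≤ j ≤ τ_{l+1}`, i.e. the number of
sign-change times strictly before `j`. -/
def cvEll (S : ℕ → ℤ) (j : ℕ) : ℕ :=
  ((Finset.range j).filter fun i => 0 < i ∧ S (i - 1) * S (i + 1) < 0).card

/-- The increments `X̄_j = (-1)^l X_1 X_{j+1}`, `τ_l + 1 ≤ j ≤ τ_{l+1}`. -/
def cvBarX (S : ℕ → ℤ) (j : ℕ) : ℤ := (-1) ^ cvEll S j * inc S 1 * inc S (j + 1)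

/-- The Csáki–Vincze transform `T(S)_n = X̄_1 + ⋯ + X̄_n`. -/
def CV (S : ℕ → ℤ) (n : ℕ) : ℤ := ∑ j ∈ Finset.range n, cvBarX S (j + 1)

/-- Iterates of the Csáki–Vincze transform. -/
def CViter : ℕ → (ℕ → ℤ) → ℕ → ℤ
  | 0, S => S
  | h + 1, S => CV (CViter h S)

/-- `S` is a simple random walk: `S_0 = 0` and the increments are
i.i.d. uniform on `{-1, 1}`. -/
def IsSRW {Ω : Type*} [MeasurableSpace Ω] (P : Measure Ω) (S : Ω → ℕ → ℤ) : Prop :=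
  (∀ ω, S ω 0 = 0) ∧
  (∀ ω i, S ω (i + 1) - S ω i = 1 ∨ S ω (i + 1) - S ω i = -1) ∧
  (∀ i, Measurable fun ω => S ω i) ∧
  iIndepFun (fun i ω => S ω (i + 1) - S ω i) P ∧
  (∀ i, P {ω | S ω (i + 1) - S ω i = 1} = 1 / 2) ∧
  (∀ i, P {ω | S ω (i + 1) - S ω i = -1} = 1 / 2)


/-!
On the block `(τ_l, τ_{l+1}]` the walk starts from `S_{τ_l + 1} = (-1)^l X_1` and cannot reach the
opposite sign before `τ_{l+1}` (it would have to cross zero, i.e. change sign), and `X̄` is `X`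
multiplied by `(-1)^l X_1` there. So `T(S)` telescopes on the block to
`-2l - 1 + (-1)^l X_1 S_{n+1} ≥ -2l - 1`, and it first reaches `-2l - 2` at `τ_{l+1}`, where `S`
passes through zero to the other side. Hence `τ_l` is the first hitting time of `-2l`.

All this needs infinitely many sign changes (otherwise `τ_l` is an `sInf ∅ = 0`). For a simple
random walk this holds almost surely: `S` is a martingale with unit increments, so it neither
converges nor stays bounded on one side only, hence it is unbounded in both directions.
-/

open Set
open scoped NNReal Topology

section SignChange

variable {f : ℕ → ℤ} (hstep : ∀ i, f (i + 1) - f i = 1 ∨ f (i + 1) - f i = -1)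
include hstep

lemma apply_eq_zero_of_sign_change {i : ℕ} (hc : f (i - 1) * f (i + 1) < 0) :
    f i = 0 ∧ f (i + 1) = -f (i - 1) := by
  cases i with
  | zero =>
    have := hstep 0
    simp only [Nat.zero_sub, zero_add] at hc this
    rcases mul_neg_iff.1 hc with ⟨_, _⟩ | ⟨_, _⟩ <;> omega
  | succ j =>
    have := hstep j
    have := hstep (j + 1)
    simp only [Nat.add_sub_cancel] at hc ⊢
    rcases mul_neg_iff.1 hc with ⟨_, _⟩ | ⟨_, _⟩ <;> omega

lemma exists_sign_change_of_neg_of_pos {a b : ℕ} (hab : a < b) (ha : f a < 0) (hb : 0 < f b) :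
    ∃ i, a < i ∧ i < b ∧ f (i - 1) * f (i + 1) < 0 := by
  induction b using Nat.strong_induction_on with
  | _ b ih =>
  obtain ⟨c, rfl⟩ : ∃ c, b = c + 1 := ⟨b - 1, by omega⟩
  have hc := hstep c
  rcases lt_or_ge 0 (f c) with hpos | hnonpos
  · obtain ⟨i, hai, hic, hi⟩ := ih c (by omega) (by grind) hpos
    exact ⟨i, hai, by omega, hi⟩
  · obtain ⟨d, rfl⟩ : ∃ d, c = d + 1 := ⟨c - 1, by grind⟩
    rcases hstep d with hd | hd
    · exact ⟨d + 1, by grind, by omega, by simp only [Nat.add_sub_cancel]; nlinarith⟩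
    · obtain ⟨i, hai, hid, hi⟩ := ih d (by omega) (by grind) (by omega)
      exact ⟨i, hai, by omega, hi⟩

lemma exists_sign_change_of_mul_neg {a b : ℕ} (hab : a < b) (h : f a * f b < 0) :
    ∃ i, a < i ∧ i < b ∧ f (i - 1) * f (i + 1) < 0 := by
  rcases mul_neg_iff.1 h with ⟨ha, hb⟩ | ⟨ha, hb⟩
  · have hstep_neg : ∀ i, (-f) (i + 1) - (-f) i = 1 ∨ (-f) (i + 1) - (-f) i = -1 := fun i => by
      have := hstep i; simp only [Pi.neg_apply]; omega
    simpa only [Pi.neg_apply, neg_mul_neg] using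
      exists_sign_change_of_neg_of_pos hstep_neg hab (neg_neg_of_pos ha) (neg_pos.2 hb)
  · exact exists_sign_change_of_neg_of_pos hstep hab ha hb

end SignChange

lemma exists_lt_of_not_bddAbove_range {α : Type*} [LinearOrder α] {u : ℕ → α}
    (h : ¬BddAbove (range u)) (c : α) (N : ℕ) : ∃ n, N < n ∧ c < u n := by
  have : Nonempty α := ⟨c⟩
  by_contra! hle
  refine h ((((finite_Iic N).image u).bddAbove.union (bddAbove_Iic (a := c))).mono ?_)
  rintro _ ⟨n, rfl⟩
  by_cases hn : n ≤ N
  · exact Or.inl ⟨n, hn, rfl⟩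
  · exact Or.inr (hle n (by omega))

lemma exists_sign_change_gt {f : ℕ → ℤ}
    (hstep : ∀ i, f (i + 1) - f i = 1 ∨ f (i + 1) - f i = -1)
    (hup : ¬BddAbove (range f)) (hdown : ¬BddBelow (range f)) (N : ℕ) :
    ∃ i, N < i ∧ f (i - 1) * f (i + 1) < 0 := by
  obtain ⟨a, hNa, ha⟩ := exists_lt_of_not_bddAbove_range (α := ℤᵒᵈ) hdown 0 N
  obtain ⟨b, hab, hb⟩ := exists_lt_of_not_bddAbove_range hup 0 a
  obtain ⟨i, hai, -, hi⟩ := exists_sign_change_of_neg_of_pos hstep hab ha hb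
  exact ⟨i, by omega, hi⟩

section CsakiVincze

/-- The factor `(-1)^l X_1` of `X̄_j` for `τ_l < j ≤ τ_{l+1}` (see `cvBarX_eq`). -/
def cvSign (f : ℕ → ℤ) (l : ℕ) : ℤ := (-1) ^ l * f 1

lemma cvSign_succ (f : ℕ → ℤ) (l : ℕ) : cvSign f (l + 1) = -cvSign f l := by
  simp only [cvSign, pow_succ]; ring

lemma cvBarX_eq {f : ℕ → ℤ} (hf0 : f 0 = 0) (j : ℕ) :
    cvBarX f j = cvSign f (cvEll f j) * (f (j + 1) - f j) := by
  simp [cvBarX, cvSign, inc, hf0]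

lemma cvTau_succ_le {f : ℕ → ℤ} {l i : ℕ} (hl : cvTau f l < i) (hi : f (i - 1) * f (i + 1) < 0) :
    cvTau f (l + 1) ≤ i :=
  Nat.sInf_le ⟨hl, hi⟩

variable {f : ℕ → ℤ} (hf0 : f 0 = 0) (hstep : ∀ i, f (i + 1) - f i = 1 ∨ f (i + 1) - f i = -1)
  (hcross : ∀ N, ∃ i, N < i ∧ f (i - 1) * f (i + 1) < 0)

include hcross in
lemma cvTau_succ_spec (l : ℕ) :
    cvTau f l < cvTau f (l + 1) ∧ f (cvTau f (l + 1) - 1) * f (cvTau f (l + 1) + 1) < 0 :=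
  Nat.sInf_mem (hcross (cvTau f l))

include hcross in
lemma cvTau_strictMono : StrictMono (cvTau f) :=
  strictMono_nat_of_lt_succ fun l => (cvTau_succ_spec hcross l).1

include hcross in
lemma exists_cvTau_le_lt_cvTau_succ (n : ℕ) : ∃ m, cvTau f m ≤ n ∧ n < cvTau f (m + 1) := by
  induction n with
  | zero => exact ⟨0, Nat.zero_le _, (cvTau_succ_spec hcross 0).1⟩
  | succ n ih =>
    obtain ⟨m, hmn, hnm⟩ := ih
    rcases lt_or_eq_of_le (Nat.succ_le_of_lt hnm) with h | h
    · exact ⟨m, by omega, h⟩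
    · exact ⟨m + 1, h.ge, by have := (cvTau_succ_spec hcross (m + 1)).1; omega⟩

include hcross in
lemma cvEll_eq {l j : ℕ} (hlj : cvTau f l < j) (hjl : j ≤ cvTau f (l + 1)) : cvEll f j = l := by
  have hmono := cvTau_strictMono hcross
  suffices hset : (Finset.range j).filter (fun i => 0 < i ∧ f (i - 1) * f (i + 1) < 0)
      = (Finset.Icc 1 l).image (cvTau f) by
    rw [cvEll, hset, Finset.card_image_of_injective _ hmono.injective, Nat.card_Icc,
      Nat.add_sub_cancel]
  ext i
  simp only [Finset.mem_filter, Finset.mem_range, Finset.mem_image, Finset.mem_Icc]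
  constructor
  · rintro ⟨hij, hi, hc⟩
    obtain ⟨m, hmi, him⟩ := exists_cvTau_le_lt_cvTau_succ hcross i
    have hmi' : cvTau f m = i := by
      by_contra hne
      have := cvTau_succ_le (lt_of_le_of_ne hmi hne) hc
      omega
    refine ⟨m, ⟨?_, ?_⟩, hmi'⟩
    · by_contra! hm
      simp_all [Nat.lt_one_iff.1 hm, cvTau]
    · exact Nat.lt_add_one_iff.1 (hmono.lt_iff_lt.1 (by omega))
  · rintro ⟨m, ⟨hm, hml⟩, rfl⟩
    obtain ⟨m, rfl⟩ : ∃ m', m = m' + 1 := ⟨m - 1, by omega⟩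
    exact ⟨by have := hmono.monotone hml; omega, hmono m.succ_pos, (cvTau_succ_spec hcross m).2⟩

include hf0 hstep in
lemma cvSign_eq_one_or_neg_one (l : ℕ) : cvSign f l = 1 ∨ cvSign f l = -1 := by
  have h1 : f 1 = 1 ∨ f 1 = -1 := by simpa [hf0] using hstep 0
  rcases neg_one_pow_eq_or ℤ l with h | h <;> rcases h1 with h1 | h1 <;> simp [cvSign, h, h1]

include hf0 hcross in
lemma cv_eq_of_cvTau_le {l n : ℕ} (hln : cvTau f l ≤ n) (hnl : n ≤ cvTau f (l + 1)) :
    CV f n = CV f (cvTau f l) + cvSign f l * (f (n + 1) - f (cvTau f l + 1)) := by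
  induction n, hln using Nat.le_induction with
  | base => ring
  | succ n hln ih =>
    rw [CV, Finset.sum_range_succ, ← CV, ih (by omega), cvBarX_eq hf0,
      cvEll_eq hcross (by omega) hnl]
    ring

include hstep in
lemma cvSign_mul_nonneg {l : ℕ} (hl : cvSign f l * f (cvTau f l + 1) = 1) {i : ℕ}
    (hli : cvTau f l < i) (hil : i ≤ cvTau f (l + 1)) : 0 ≤ cvSign f l * f i := by
  by_contra! hneg
  have hlt : cvTau f l + 1 < i := by
    have : i ≠ cvTau f l + 1 := by rintro rfl; omega
    omega
  have hmul : f (cvTau f l + 1) * f i < 0 := by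
    rcases Int.eq_one_or_neg_one_of_mul_eq_one' hl with ⟨hs, ha⟩ | ⟨hs, ha⟩ <;>
      rw [hs] at hneg <;> rw [ha] <;> omega
  obtain ⟨j, hlj, hji, hj⟩ := exists_sign_change_of_mul_neg hstep hlt hmul
  have := cvTau_succ_le (by omega : cvTau f l < j) hj
  omega

include hf0 hstep hcross in
lemma cvSign_mul_apply_cvTau_add_one (l : ℕ) : cvSign f l * f (cvTau f l + 1) = 1 := by
  induction l with
  | zero =>
    rcases cvSign_eq_one_or_neg_one hf0 hstep 0 with h | h <;>
      simp_all [cvSign, cvTau]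
  | succ l ih =>
    obtain ⟨hlt, hc⟩ := cvTau_succ_spec hcross l
    obtain ⟨hzero, hflip⟩ := apply_eq_zero_of_sign_change hstep hc
    have hprev : 0 ≤ cvSign f l * f (cvTau f (l + 1) - 1) := by
      refine cvSign_mul_nonneg hstep ih ?_ (Nat.sub_le _ _)
      by_contra! h
      have : cvTau f (l + 1) = cvTau f l + 1 := by omega
      rw [← this, hzero] at ih
      omega
    have hunit : f (cvTau f (l + 1) - 1) = 1 ∨ f (cvTau f (l + 1) - 1) = -1 := by
      have := hstep (cvTau f (l + 1) - 1)
      rw [Nat.sub_add_cancel (by omega), hzero] at this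
      omega
    rw [hflip, cvSign_succ]
    rcases cvSign_eq_one_or_neg_one hf0 hstep l with h | h <;> rw [h] at hprev ⊢ <;> omega

include hf0 hstep hcross in
lemma cv_cvTau (l : ℕ) : CV f (cvTau f l) = -(2 * (l : ℤ)) := by
  induction l with
  | zero => simp [CV, cvTau]
  | succ l ih =>
    have hl := cvSign_mul_apply_cvTau_add_one hf0 hstep hcross l
    have hl' := cvSign_mul_apply_cvTau_add_one hf0 hstep hcross (l + 1)
    rw [cvSign_succ] at hl'
    rw [cv_eq_of_cvTau_le hf0 hcross (cvTau_succ_spec hcross l).1.le le_rfl, ih]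
    push_cast
    linear_combination -hl - hl'

include hf0 hstep hcross in
lemma lt_cv_of_lt_cvTau {l n : ℕ} (hn : n < cvTau f (l + 1)) :
    -(2 * ((l + 1 : ℕ) : ℤ)) < CV f n := by
  obtain ⟨m, hmn, hnm⟩ := exists_cvTau_le_lt_cvTau_succ hcross n
  have hml : m ≤ l := Nat.lt_add_one_iff.1 ((cvTau_strictMono hcross).lt_iff_lt.1 (by omega))
  have hnonneg := cvSign_mul_nonneg hstep (cvSign_mul_apply_cvTau_add_one hf0 hstep hcross m)
    (by omega : cvTau f m < n + 1) hnm
  rw [cv_eq_of_cvTau_le hf0 hcross hmn hnm.le, cv_cvTau hf0 hstep hcross,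
    mul_sub, cvSign_mul_apply_cvTau_add_one hf0 hstep hcross]
  push_cast
  omega

include hf0 hstep hcross in
theorem isLeast_cvTau (l : ℕ) : IsLeast {n | CV f n = -(2 * (l : ℤ))} (cvTau f l) := by
  refine ⟨cv_cvTau hf0 hstep hcross l, fun n hn => ?_⟩
  by_contra! hlt
  cases l with
  | zero => simp [cvTau] at hlt
  | succ l =>
    have := lt_cv_of_lt_cvTau hf0 hstep hcross hlt
    rw [show CV f n = _ from hn] at this
    exact lt_irrefl _ this

end CsakiVincze

section RandomWalk

variable {Ω : Type*} [MeasurableSpace Ω] {P : Measure Ω}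

lemma martingale_partialSum_of_iIndepFun {X : ℕ → Ω → ℝ} (hX : ∀ k, StronglyMeasurable (X k))
    (hind : iIndepFun X P) (hint : ∀ k, Integrable (X k) P) (hmean : ∀ k, P[X k] = 0) :
    Martingale (fun n ω => ∑ k ∈ Finset.range (n + 1), X k ω) (Filtration.natural X hX) P := by
  have := hind.isProbabilityMeasure
  refine martingale_of_condExp_sub_eq_zero_nat (fun n => ?_)
    (fun n => integrable_finsetSum _ fun k _ => hint k) (fun n => ?_)
  · refine Finset.stronglyMeasurable_fun_sum _ fun k hk => ?_
    exact (Filtration.stronglyAdapted_natural hX k).mono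
      (Filtration.mono _ (Nat.lt_add_one_iff.1 (Finset.mem_range.1 hk)))
  · have hinc : (fun ω => ∑ k ∈ Finset.range (n + 1 + 1), X k ω)
        - (fun ω => ∑ k ∈ Finset.range (n + 1), X k ω) = X (n + 1) := by
      ext ω; simp [Finset.sum_range_succ _ (n + 1)]
    rw [hinc]
    filter_upwards [hind.condExp_natural_ae_eq_of_lt hX n.lt_succ_self] with ω hω
    rw [hω, hmean]
    rfl

lemma ae_not_bddAbove_and_not_bddBelow_partialSum {X : ℕ → Ω → ℝ}
    (hX : ∀ k, StronglyMeasurable (X k)) (hind : iIndepFun X P) (habs : ∀ k ω, |X k ω| = 1)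
    (hmean : ∀ k, P[X k] = 0) :
    ∀ᵐ ω ∂P, ¬BddAbove (range fun n => ∑ k ∈ Finset.range (n + 1), X k ω) ∧
      ¬BddBelow (range fun n => ∑ k ∈ Finset.range (n + 1), X k ω) := by
  have := hind.isProbabilityMeasure
  set F : ℕ → Ω → ℝ := fun n ω => ∑ k ∈ Finset.range (n + 1), X k ω
  have hinc : ∀ n ω, |F (n + 1) ω - F n ω| = 1 := fun n ω => by
    simp [F, Finset.sum_range_succ _ (n + 1), habs]
  have hF : Martingale F (Filtration.natural X hX) P :=
    martingale_partialSum_of_iIndepFun hX hind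
      (fun k => Integrable.of_bound (hX k).aestronglyMeasurable 1
        (ae_of_all _ fun ω => (habs k ω).le)) hmean
  have hbdd : ∀ᵐ ω ∂P, ∀ n, |F (n + 1) ω - F n ω| ≤ ((1 : ℝ≥0) : ℝ) :=
    ae_of_all _ fun ω n => by simp [hinc]
  have hdiv : ∀ ω, ¬∃ c, Tendsto (fun n => F n ω) atTop (𝓝 c) := by
    rintro ω ⟨c, hc⟩
    have h0 : Tendsto (fun n => F (n + 1) ω - F n ω) atTop (𝓝 0) := by
      simpa using ((tendsto_add_atTop_iff_nat 1).2 hc).sub hc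
    have h1 := h0.abs
    simp only [hinc, abs_zero] at h1
    exact one_ne_zero (tendsto_nhds_unique tendsto_const_nhds h1)
  filter_upwards [hF.submartingale.bddAbove_iff_exists_tendsto hbdd,
    hF.bddAbove_range_iff_bddBelow_range hbdd] with ω hconv hiff
  exact ⟨fun h => hdiv ω (hconv.1 h), fun h => hdiv ω (hconv.1 (hiff.2 h))⟩

lemma integral_intCast_eq_zero_of_symm [IsFiniteMeasure P] {Z : Ω → ℤ} (hZ : Measurable Z)
    (hpm : ∀ ω, Z ω = 1 ∨ Z ω = -1) (hsymm : P {ω | Z ω = 1} = P {ω | Z ω = -1}) :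
    ∫ ω, (Z ω : ℝ) ∂P = 0 := by
  have hA : MeasurableSet {ω | Z ω = 1} := hZ (measurableSet_singleton 1)
  have hB : MeasurableSet {ω | Z ω = -1} := hZ (measurableSet_singleton (-1))
  have hZAB : (fun ω => (Z ω : ℝ)) = {ω | Z ω = 1}.indicator 1 - {ω | Z ω = -1}.indicator 1 := by
    ext ω; rcases hpm ω with h | h <;> simp [Set.indicator, h]
  rw [hZAB, integral_sub' ((integrable_const 1).indicator hA) ((integrable_const 1).indicator hB),
    integral_indicator_one hA, integral_indicator_one hB, measureReal_def, measureReal_def, hsymm,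
    sub_self]

lemma IsSRW.ae_sign_change_gt {S : Ω → ℕ → ℤ} (hS : IsSRW P S) :
    ∀ᵐ ω ∂P, ∀ N, ∃ i, N < i ∧ S ω (i - 1) * S ω (i + 1) < 0 := by
  obtain ⟨hzero, hpm, hSm, hind, hup, hdown⟩ := hS
  have hincm : ∀ k, Measurable fun ω => S ω (k + 1) - S ω k := fun k => (hSm (k + 1)).sub (hSm k)
  set X : ℕ → Ω → ℝ := fun k ω => ((S ω (k + 1) - S ω k : ℤ) : ℝ)
  have hXm : ∀ k, StronglyMeasurable (X k) := fun k =>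
    (measurable_from_top.comp (hincm k)).stronglyMeasurable
  have hXind : iIndepFun X P :=
    hind.comp (fun _ => (Int.cast : ℤ → ℝ)) (fun _ => measurable_from_top)
  have hXabs : ∀ k ω, |X k ω| = 1 := fun k ω => by
    rcases hpm ω k with h | h <;> simp only [X, h] <;> norm_num
  have := hind.isProbabilityMeasure
  have hmean : ∀ k, P[X k] = 0 := fun k =>
    integral_intCast_eq_zero_of_symm (hincm k) (fun ω => hpm ω k) ((hup k).trans (hdown k).symm)
  have hsum : ∀ ω n, ∑ k ∈ Finset.range (n + 1), X k ω = S ω (n + 1) := fun ω n => by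
    simp only [X, Int.cast_sub]
    rw [Finset.sum_range_sub (fun k => (S ω k : ℝ)), hzero, Int.cast_zero, sub_zero]
  filter_upwards [ae_not_bddAbove_and_not_bddBelow_partialSum hXm hXind hXabs hmean] with ω hω
  simp only [hsum] at hω
  have hshift : (range fun n => (S ω (n + 1) : ℝ)) ⊆ Int.cast '' range (S ω) := by
    rintro _ ⟨n, rfl⟩
    exact ⟨_, ⟨n + 1, rfl⟩, rfl⟩
  exact exists_sign_change_gt (hpm ω) (fun h => hω.1 ((Int.cast_mono.map_bddAbove h).mono hshift))
    (fun h => hω.2 ((Int.cast_mono.map_bddBelow h).mono hshift))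

end RandomWalk

lemma measurableSet_exists_le_eq {Ω : Type*} {Y : ℕ → Ω → ℤ} (n : ℕ) (c : ℤ) :
    MeasurableSet[⨆ k ∈ Iic n, MeasurableSpace.comap (Y k) inferInstance]
      {ω | ∃ k ≤ n, Y k ω = c} := by
  have hset : {ω | ∃ k ≤ n, Y k ω = c} = ⋃ k ∈ Iic n, Y k ⁻¹' {c} := by ext; simp
  rw [hset]
  refine MeasurableSet.biUnion (to_countable _) fun k hk => ?_
  exact Measurable.of_comap_le (le_iSup₂ (f := fun k (_ : k ∈ Iic n) =>
    MeasurableSpace.comap (Y k) inferInstance) k hk) (measurableSet_singleton c)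

theorem cv_tau_eq_hitting_time_general {Ω : Type*} [MeasurableSpace Ω] (P : Measure Ω)
    (S : Ω → ℕ → ℤ) (hS : IsSRW P S) :
    (∀ᵐ ω ∂P, ∀ l : ℕ, cvTau (S ω) l = sInf {n : ℕ | CV (S ω) n = -(2 * (l : ℤ))}) ∧
    ∀ l n : ℕ, ∃ A : Set Ω,
      MeasurableSet[⨆ k ∈ Set.Iic n,
        MeasurableSpace.comap (fun ω => CV (S ω) k) inferInstance] A ∧
      P (symmDiff A {ω | cvTau (S ω) l ≤ n}) = 0 := by
  have hleast : ∀ᵐ ω ∂P, ∀ l : ℕ, IsLeast {n | CV (S ω) n = -(2 * (l : ℤ))} (cvTau (S ω) l) := by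
    filter_upwards [hS.ae_sign_change_gt] with ω hω l
    exact isLeast_cvTau (hS.1 ω) (hS.2.1 ω) hω l
  refine ⟨hleast.mono fun ω h l => (h l).csInf_eq.symm, fun l n =>
    ⟨_, measurableSet_exists_le_eq (Y := fun k ω => CV (S ω) k) n (-(2 * (l : ℤ))), ?_⟩⟩
  rw [measure_symmDiff_eq_zero_iff, eventuallyEq_set]
  filter_upwards [hleast] with ω h
  exact ⟨fun ⟨k, hk, hCV⟩ => ((h l).2 hCV).trans hk, fun hτ => ⟨_, hτ, (h l).1⟩⟩

/-- `τ_l = min{n ≥ 0 : T(S)_n = -2l}` almost surely; in particular each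
`τ_l` is a stopping time with respect to the (augmented) natural filtration of `T(S)`. -/
theorem cv_tau_eq_hitting_time {Ω : Type*} [MeasurableSpace Ω] (P : Measure Ω)
    [IsProbabilityMeasure P] (S : Ω → ℕ → ℤ) (hS : IsSRW P S) :
    (∀ᵐ ω ∂P, ∀ l : ℕ, cvTau (S ω) l = sInf {n : ℕ | CV (S ω) n = -(2 * (l : ℤ))}) ∧
    ∀ l n : ℕ, ∃ A : Set Ω,
      MeasurableSet[⨆ k ∈ Set.Iic n,
        MeasurableSpace.comap (fun ω => CV (S ω) k) inferInstance] A ∧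
      P (symmDiff A {ω | cvTau (S ω) l ≤ n}) = 0 :=
  cv_tau_eq_hitting_time_general P S hS
end
end

section
/- For a simple random walk S, for all n ≥ 0, the σ-field generated by (T(S)_j, j ≤ n) together with σ(S_1) equals the σ-field generated by (S_j, j ≤ n+1). -/
open MeasureTheory ProbabilityTheory Filter

noncomputable section

/-!
Each `T(S)_j` is a function of `S_0, …, S_{j+1}`, which gives one inclusion. Conversely, `S_1 = ±1`
and the parity `l` of the number of sign changes before `j + 1` is a function of `S_0, …, S_{j+1}`,
so `X_{j+2} = (-1)^l S_1 (T(S)_{j+1} - T(S)_j)` recovers the walk step by step from `S_1` and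
`T(S)`.
-/

open Preorder in
theorem measurable_comp_of_dependsOn_Iic {Ω ι α β : Type*} [Preorder ι] [LocallyFiniteOrderBot ι]
    [MeasurableSpace α] [Countable α] [MeasurableSingletonClass α] [MeasurableSpace β]
    [Nonempty β] {m : MeasurableSpace Ω} {X : Ω → ι → α} {F : (ι → α) → β} {k : ι}
    (hF : DependsOn F (Set.Iic k)) (hX : ∀ j ≤ k, Measurable[m] fun ω => X ω j) :
    Measurable[m] fun ω => F (X ω) := by
  obtain ⟨G, rfl⟩ := dependsOn_iff_exists_comp.1 (Finset.coe_Iic k ▸ hF)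
  have hXk : Measurable[m] fun ω => frestrictLe k (X ω) :=
    measurable_pi_lambda _ fun j => hX j (Finset.mem_Iic.1 j.2)
  exact (measurable_of_countable G).comp hXk

theorem dependsOn_cvEll (j : ℕ) : DependsOn (fun S => cvEll S j) (Set.Iic j) := by
  intro S S' h
  refine congrArg Finset.card (Finset.filter_congr fun i hi => ?_)
  rw [Finset.mem_range] at hi
  rw [h (i - 1) (Set.mem_Iic.2 (by omega)), h (i + 1) (Set.mem_Iic.2 (by omega))]

theorem dependsOn_CV (n : ℕ) : DependsOn (fun S => CV S n) (Set.Iic (n + 1)) := by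
  intro (S : ℕ → ℤ) (S' : ℕ → ℤ) h
  refine Finset.sum_congr rfl fun j hj => ?_
  rw [Finset.mem_range] at hj
  have hS : ∀ i ≤ j + 2, S i = S' i := fun i hi => h i (Set.mem_Iic.2 (by omega))
  have hℓ : cvEll S (j + 1) = cvEll S' (j + 1) :=
    dependsOn_cvEll (j + 1) fun i hi => hS i ((Set.mem_Iic.1 hi).trans (by omega))
  simp only [cvBarX, inc, Nat.add_sub_cancel, Nat.sub_self]
  rw [hℓ, hS 0 (by omega), hS 1 (by omega), hS (j + 1) (by omega), hS (j + 1 + 1) (by omega)]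

theorem CV_succ_sub (S : ℕ → ℤ) (n : ℕ) : CV S (n + 1) - CV S n = cvBarX S (n + 1) := by
  rw [CV, CV, Finset.sum_range_succ, add_sub_cancel_left]

theorem apply_add_two_eq_of_CV (S : ℕ → ℤ) (h0 : S 0 = 0) (h1 : S 1 = 1 ∨ S 1 = -1) (m : ℕ) :
    S (m + 2) = S (m + 1) + (-1) ^ cvEll S (m + 1) * S 1 * (CV S (m + 1) - CV S m) := by
  have hsq : ((-1) ^ cvEll S (m + 1) * S 1) ^ 2 = 1 := by
    rw [mul_pow, pow_right_comm, neg_one_sq, one_pow, one_mul]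
    rcases h1 with h1 | h1 <;> simp [h1]
  simp only [CV_succ_sub, cvBarX, inc, Nat.add_sub_cancel, Nat.sub_self, h0]
  linear_combination (S (m + 1) - S (m + 2)) * hsq

section Measurability

variable {Ω : Type*} {m : MeasurableSpace Ω} {S : Ω → ℕ → ℤ} {n : ℕ}

theorem measurable_CV_of_measurable (hS : ∀ j ≤ n + 1, Measurable[m] fun ω => S ω j) :
    ∀ j ≤ n, Measurable[m] fun ω => CV (S ω) j :=
  fun j hj => measurable_comp_of_dependsOn_Iic (F := fun S => CV S j) (dependsOn_CV j)
    fun i hi => hS i (by omega)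

theorem measurable_of_measurable_CV (h0 : ∀ ω, S ω 0 = 0) (h1 : ∀ ω, S ω 1 = 1 ∨ S ω 1 = -1)
    (hS₁ : Measurable[m] fun ω => S ω 1) (hCV : ∀ j ≤ n, Measurable[m] fun ω => CV (S ω) j) :
    ∀ j ≤ n + 1, Measurable[m] fun ω => S ω j := by
  intro j hj
  induction j using Nat.strong_induction_on with
  | _ j ih =>
    match j with
    | 0 => simpa only [h0] using measurable_const
    | 1 => exact hS₁
    | k + 2 =>
      have hsign : Measurable[m] fun ω => (-1 : ℤ) ^ cvEll (S ω) (k + 1) :=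
        measurable_comp_of_dependsOn_Iic (F := fun S => (-1 : ℤ) ^ cvEll S (k + 1))
          (fun _ _ h => congrArg ((-1 : ℤ) ^ ·) (dependsOn_cvEll (k + 1) h))
          fun i hi => ih i (by omega) (by omega)
      simp only [fun ω => apply_add_two_eq_of_CV (S ω) (h0 ω) (h1 ω) k]
      exact (ih (k + 1) (by omega) (by omega)).add
        ((hsign.mul hS₁).mul ((hCV (k + 1) (by omega)).sub (hCV k (by omega))))

end Measurability

theorem cv_sigma_sup_first_eq_general {Ω : Type*} [MeasurableSpace Ω] (P : Measure Ω)
    (S : Ω → ℕ → ℤ) (hS : IsSRW P S) (n : ℕ) :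
    (⨆ j ∈ Set.Iic n, MeasurableSpace.comap (fun ω => CV (S ω) j) inferInstance) ⊔
        MeasurableSpace.comap (fun ω => S ω 1) inferInstance =
      ⨆ j ∈ Set.Iic (n + 1), MeasurableSpace.comap (fun ω => S ω j) inferInstance := by
  set 𝓖 := (⨆ j ∈ Set.Iic n, MeasurableSpace.comap (fun ω => CV (S ω) j) inferInstance) ⊔
    MeasurableSpace.comap (fun ω => S ω 1) inferInstance
  set 𝓕 := ⨆ j ∈ Set.Iic (n + 1), MeasurableSpace.comap (fun ω => S ω j) inferInstance
  have hS𝓕 (j : ℕ) (hj : j ≤ n + 1) : Measurable[𝓕] fun ω => S ω j :=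
    Measurable.of_comap_le (le_iSup₂_of_le j hj le_rfl)
  have hCV𝓖 (j : ℕ) (hj : j ≤ n) : Measurable[𝓖] fun ω => CV (S ω) j :=
    Measurable.of_comap_le (le_sup_of_le_left (le_iSup₂_of_le j hj le_rfl))
  have hS₁ (ω : Ω) : S ω 1 = 1 ∨ S ω 1 = -1 := by simpa [hS.1 ω] using hS.2.1 ω 0
  have hS𝓖 :=
    measurable_of_measurable_CV (m := 𝓖) hS.1 hS₁ (Measurable.of_comap_le le_sup_right) hCV𝓖
  apply le_antisymm
  · exact sup_le (iSup₂_le fun j hj => (measurable_CV_of_measurable hS𝓕 j hj).comap_le)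
      (hS𝓕 1 (by omega)).comap_le
  · exact iSup₂_le fun j hj => (hS𝓖 j hj).comap_le

/-- `σ(T(S)_j, j ≤ n) ∨ σ(S_1) = σ(S_j, j ≤ n + 1)`. -/
theorem cv_sigma_sup_first_eq {Ω : Type*} [MeasurableSpace Ω] (P : Measure Ω)
    [IsProbabilityMeasure P] (S : Ω → ℕ → ℤ) (hS : IsSRW P S) (n : ℕ) :
    (⨆ j ∈ Set.Iic n, MeasurableSpace.comap (fun ω => CV (S ω) j) inferInstance) ⊔
        MeasurableSpace.comap (fun ω => S ω 1) inferInstance =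
      ⨆ j ∈ Set.Iic (n + 1), MeasurableSpace.comap (fun ω => S ω j) inferInstance :=
  cv_sigma_sup_first_eq_general P S hS n

end
end
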